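/- arXiv:1311.7045 — 2 statements merged into one kernel-verified Lean document; each statement's English description precedes it below -/
import Mathlib

section
/- Let N ≥ 2 and let x ∈ ℂ^N be nonzero with x[n] ≠ 0 for every n = 2,…,N−1. Then there exist real numbers γ_{m,n} (m = 1,…,4; n = 1,…,N−1) such that the Hermitian matrix Y = Σ_{n=1}^{N−1} Σ_{m=1}^{4} γ_{m,n} · φ_{m,n} φ_{m,n}* satisfies Y x = 0 and ⟨Y u, u⟩ > 0 for every nonzero u ∈ ℂ^N with ⟨u, x⟩ = 0. (Existence of a dual certificate in the range of A_Φ* for signals in S_Φ.) -/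
open Complex Matrix MeasureTheory

noncomputable section

/-- α = √((1 − 1/√3)/2) -/
def alph : ℂ := (Real.sqrt ((1 - 1/Real.sqrt 3)/2) : ℝ)

/-- β = e^{i5π/4}·√((1 + 1/√3)/2) -/
def beta : ℂ := Complex.exp (Complex.I * (5 * (Real.pi : ℂ) / 4)) *
  (Real.sqrt ((1 + 1/Real.sqrt 3)/2) : ℝ)

/-- the four frame vectors a₁ = (α,β), a₂ = (β,α), a₃ = (α,−β), a₄ = (−β,α) in ℂ² -/
def coef : Fin 4 → Fin 2 → ℂ := ![![alph, beta], ![beta, alph], ![alph, -beta], ![-beta, alph]]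

/-- inner product ⟨x,y⟩ = Σ x[n]·conj(y[n]) -/
def inn {N : ℕ} (x y : Fin N → ℂ) : ℂ := ∑ i, x i * (starRingEnd ℂ) (y i)

/-- Euclidean norm ‖x‖ = √⟨x,x⟩ -/
def nrm {N : ℕ} (x : Fin N → ℂ) : ℝ := Real.sqrt (inn x x).re

/-- outer product x y* -/
def outer {N : ℕ} (x y : Fin N → ℂ) : Matrix (Fin N) (Fin N) ℂ :=
  fun i j => x i * (starRingEnd ℂ) (y j)

/-- measurement vectors φ_{m,n} (0-based n: nonzero entries at positions n and n+1) -/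
def phiv (N : ℕ) (m : Fin 4) (n : ℕ) : Fin N → ℂ :=
  fun i => if (i : ℕ) = n then coef m 0 else if (i : ℕ) = n + 1 then coef m 1 else 0

/-- measurement vectors ψ_{m,n} (0-based n: nonzero entries at positions 0 and n+1) -/
def psiv (N : ℕ) (m : Fin 4) (n : ℕ) : Fin N → ℂ :=
  fun i => if (i : ℕ) = 0 then coef m 0 else if (i : ℕ) = n + 1 then coef m 1 else 0

/-- Hilbert–Schmidt inner product ⟨X,Y⟩ = trace(Y*X) -/
def hs {N : ℕ} (X Y : Matrix (Fin N) (Fin N) ℂ) : ℂ := Matrix.trace (Yᴴ * X)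

/-- Frobenius (Hilbert–Schmidt) norm -/
def frob {N : ℕ} (X : Matrix (Fin N) (Fin N) ℂ) : ℝ := Real.sqrt (Matrix.trace (Xᴴ * X)).re

/-- spectral norm (largest singular value) -/
def specNorm {N : ℕ} (A : Matrix (Fin N) (Fin N) ℂ) : ℝ :=
  sSup {r : ℝ | ∃ v : Fin N → ℂ, nrm v ≤ 1 ∧ r = nrm (A.mulVec v)}

/-!
Put `v n = conj (x (n+1)) • e n - conj (x n) • e (n+1)`, so that `⟨x, v n⟩ = 0`, and take
`Y = ∑ n, v n (v n)*`. Each `v n (v n)*` is a Hermitian matrix supported on the block `{n, n+1}`,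
and the four rank-one matrices `a m (a m)*` built from the frame vectors span the Hermitian
`2 × 2` matrices over `ℝ`, so `Y` is of the required form with real coefficients. Then
`Y x = ∑ n, ⟨x, v n⟩ • v n = 0` and `⟨Y u, u⟩ = ∑ n, |⟨u, v n⟩|² ≥ 0`. If this vanishes, then
`u n * x (n+1) = u (n+1) * x n` for all `n`; since `x` has no zeros in the interior, all `2 × 2`
minors of `(u, x)` vanish, so `u` is proportional to `x` and `⟨u, x⟩ = 0` forces `u = 0`.
-/
open ComplexConjugate
open scoped ComplexOrder

lemma one_div_sqrt_three : 1 / Real.sqrt 3 = Real.sqrt 3 / 3 := by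
  field_simp; rw [Real.sq_sqrt (by norm_num)]

lemma half_one_sub_one_div_sqrt_three_nonneg : 0 ≤ (1 - 1 / Real.sqrt 3) / 2 := by
  rw [one_div_sqrt_three]
  nlinarith [Real.sqrt_nonneg 3, Real.sq_sqrt (show (0:ℝ) ≤ 3 by norm_num)]

lemma alph_mul_conj_alph : alph * conj alph = ((3 - Real.sqrt 3) / 6 : ℝ) := by
  rw [alph, conj_ofReal, ← ofReal_mul, Real.mul_self_sqrt half_one_sub_one_div_sqrt_three_nonneg,
    one_div_sqrt_three]
  congr 1; ring

lemma beta_mul_conj_beta : beta * conj beta = ((3 + Real.sqrt 3) / 6 : ℝ) := by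
  rw [mul_conj, beta, normSq_mul,
    show I * (5 * (Real.pi : ℂ) / 4) = ((5 * Real.pi / 4 : ℝ) : ℂ) * I by push_cast; ring,
    normSq_eq_norm_sq (exp _), norm_exp_ofReal_mul_I, one_pow, one_mul, normSq_ofReal,
    Real.mul_self_sqrt (by positivity), one_div_sqrt_three]
  push_cast; ring

lemma beta_eq :
    beta = ((Real.sqrt ((1 + 1 / Real.sqrt 3) / 2) * (Real.sqrt 2 / 2) : ℝ) : ℂ) * (-1 - I) := by
  rw [beta, show I * (5 * (Real.pi : ℂ) / 4) = ((Real.pi / 4 + Real.pi : ℝ) : ℂ) * I by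
    push_cast; ring, exp_mul_I, ← ofReal_cos, ← ofReal_sin, Real.cos_add_pi, Real.sin_add_pi,
    Real.cos_pi_div_four, Real.sin_pi_div_four]
  push_cast; ring

lemma sqrt_mul_sqrt_mul_sqrt_two_div_two :
    Real.sqrt ((1 - 1 / Real.sqrt 3) / 2) *
      (Real.sqrt ((1 + 1 / Real.sqrt 3) / 2) * (Real.sqrt 2 / 2)) = Real.sqrt 3 / 6 := by
  have h3 := Real.sq_sqrt (show (0:ℝ) ≤ 3 by norm_num)
  rw [← sq_eq_sq₀ (by positivity) (by positivity), mul_pow, mul_pow, div_pow,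
    Real.sq_sqrt half_one_sub_one_div_sqrt_three_nonneg, Real.sq_sqrt (by positivity),
    Real.sq_sqrt (by norm_num), one_div_sqrt_three]
  linear_combination (-1 / 24) * h3

lemma alph_mul_conj_beta : alph * conj beta = (Real.sqrt 3 / 6 : ℝ) * (-1 + I) := by
  rw [beta_eq, alph, map_mul, conj_ofReal, ← sqrt_mul_sqrt_mul_sqrt_two_div_two]
  simp only [map_sub, map_neg, map_one, conj_I]
  push_cast; ring

lemma beta_mul_conj_alph : beta * conj alph = (Real.sqrt 3 / 6 : ℝ) * (-1 - I) := by
  rw [beta_eq, alph, conj_ofReal, ← sqrt_mul_sqrt_mul_sqrt_two_div_two]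
  push_cast; ring

/-- Coordinates of a Hermitian `H` in the spanning family `a m (a m)*`: the solution of the real
linear system whose coefficients are the Gram products `alph_mul_conj_alph`, …,
`beta_mul_conj_alph`. -/
def frameCoeff (H : Matrix (Fin 2) (Fin 2) ℂ) : Fin 4 → ℝ :=
  ![((H 0 0).re + (H 1 1).re - Real.sqrt 3 * ((H 0 0).re - (H 1 1).re)) / 4
      + Real.sqrt 3 * ((H 0 1).im - (H 0 1).re) / 2,
    ((H 0 0).re + (H 1 1).re + Real.sqrt 3 * ((H 0 0).re - (H 1 1).re)) / 4
      - Real.sqrt 3 * ((H 0 1).im + (H 0 1).re) / 2,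
    ((H 0 0).re + (H 1 1).re - Real.sqrt 3 * ((H 0 0).re - (H 1 1).re)) / 4
      - Real.sqrt 3 * ((H 0 1).im - (H 0 1).re) / 2,
    ((H 0 0).re + (H 1 1).re + Real.sqrt 3 * ((H 0 0).re - (H 1 1).re)) / 4
      + Real.sqrt 3 * ((H 0 1).im + (H 0 1).re) / 2]

theorem Matrix.IsHermitian.sum_frameCoeff_smul_vecMulVec_coef {H : Matrix (Fin 2) (Fin 2) ℂ}
    (hH : H.IsHermitian) :
    ∑ m, (frameCoeff H m : ℂ) • vecMulVec (coef m) (star (coef m)) = H := by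
  have h3 : ((Real.sqrt 3 : ℝ) : ℂ) ^ 2 = 3 := by
    rw [← ofReal_pow, Real.sq_sqrt (by norm_num)]; norm_num
  have h00 : ((H 0 0).re : ℂ) = H 0 0 := conj_eq_iff_re.mp (hH.apply 0 0)
  have h11 : ((H 1 1).re : ℂ) = H 1 1 := conj_eq_iff_re.mp (hH.apply 1 1)
  have h01 : ((H 0 1).re : ℂ) + (H 0 1).im * I = H 0 1 := re_add_im _
  have h10 : ((H 0 1).re : ℂ) - (H 0 1).im * I = H 1 0 := by
    rw [← hH.apply 1 0, ← re_add_im (star (H 0 1))]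
    simp [sub_eq_add_neg]
  ext k l
  fin_cases k <;> fin_cases l <;>
    simp only [frameCoeff, vecMulVec, coef, cons_val', cons_val_fin_one, Pi.star_apply,
      RCLike.star_def, smul_of, coe_smul, Fin.zero_eta, Fin.mk_one, Fin.sum_univ_four,
      cons_val_zero, cons_val_one, of_add_of, cons_val, add_apply, of_apply, Pi.add_apply,
      Pi.smul_apply, alph_mul_conj_alph, beta_mul_conj_beta, alph_mul_conj_beta,
      beta_mul_conj_alph, ofReal_div, ofReal_sub, ofReal_add, ofReal_mul, ofReal_ofNat, real_smul,
      neg_mul, map_neg, mul_neg, neg_neg, smul_neg]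
  · linear_combination ((H 0 0).re - (H 1 1).re : ℂ) / 6 * h3 + h00
  · linear_combination ((H 0 1).re + (H 0 1).im * I : ℂ) / 3 * h3 + h01
  · linear_combination ((H 0 1).re - (H 0 1).im * I : ℂ) / 3 * h3 + h10
  · linear_combination -((H 0 0).re - (H 1 1).re : ℂ) / 6 * h3 + h11

def embedPair (N n : ℕ) (w : Fin 2 → ℂ) : Fin N → ℂ :=
  fun i => if (i : ℕ) = n then w 0 else if (i : ℕ) = n + 1 then w 1 else 0

lemma phiv_eq_embedPair (N : ℕ) (m : Fin 4) (n : ℕ) : phiv N m n = embedPair N n (coef m) := rfl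

def zeroExtend {N : ℕ} (x : Fin N → ℂ) (k : ℕ) : ℂ :=
  if h : k < N then x ⟨k, h⟩ else 0

lemma zeroExtend_val {N : ℕ} (x : Fin N → ℂ) (i : Fin N) : zeroExtend x i = x i := by
  simp [zeroExtend]

lemma sum_smul_outer_embedPair {N : ℕ} (n : ℕ) {ι : Type*} [Fintype ι] (γ : ι → ℂ)
    (a : ι → Fin 2 → ℂ) (p : Fin 2 → ℂ)
    (h : ∑ m, γ m • vecMulVec (a m) (star (a m)) = vecMulVec p (star p)) :
    ∑ m, γ m • outer (embedPair N n (a m)) (embedPair N n (a m))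
      = outer (embedPair N n p) (embedPair N n p) := by
  have hkl (k l : Fin 2) : ∑ m, γ m * (a m k * conj (a m l)) = p k * conj (p l) := by
    simpa [Matrix.sum_apply, vecMulVec] using congrFun (congrFun h k) l
  ext i j
  simp only [Matrix.sum_apply, Matrix.smul_apply, smul_eq_mul, outer, embedPair]
  split_ifs <;> simp [hkl]

lemma sum_ite_val_eq_mul {N : ℕ} (w : Fin N → ℂ) (k : ℕ) (c : ℂ) :
    ∑ i : Fin N, (if (i : ℕ) = k then w i * c else 0) = zeroExtend w k * c := by
  unfold zeroExtend
  split_ifs with hk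
  · rw [Finset.sum_eq_single ⟨k, hk⟩ (fun i _ hi => if_neg fun e => hi (Fin.ext e)) (by simp)]
    simp
  · rw [zero_mul]
    exact Finset.sum_eq_zero fun i _ => if_neg (by have := i.isLt; omega)

lemma inn_embedPair {N : ℕ} (w : Fin N → ℂ) (n : ℕ) (p : Fin 2 → ℂ) :
    inn w (embedPair N n p) = zeroExtend w n * conj (p 0) + zeroExtend w (n + 1) * conj (p 1) := by
  rw [← sum_ite_val_eq_mul, ← sum_ite_val_eq_mul, ← Finset.sum_add_distrib]
  refine Finset.sum_congr rfl fun i _ => ?_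
  simp only [embedPair]
  split_ifs <;> first | omega | simp

lemma outer_mulVec {N : ℕ} (v w u : Fin N → ℂ) : outer v w *ᵥ u = inn u w • v := by
  ext i
  simp only [mulVec, dotProduct, outer, inn, Pi.smul_apply, smul_eq_mul, Finset.sum_mul]
  exact Finset.sum_congr rfl fun j _ => by ring

lemma inn_sum_left {N : ℕ} {ι : Type*} (s : Finset ι) (f : ι → Fin N → ℂ) (u : Fin N → ℂ) :
    inn (∑ n ∈ s, f n) u = ∑ n ∈ s, inn (f n) u := by
  simp only [inn, Finset.sum_apply, Finset.sum_mul]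
  exact Finset.sum_comm

lemma inn_smul_left {N : ℕ} (c : ℂ) (v u : Fin N → ℂ) : inn (c • v) u = c * inn v u := by
  simp only [inn, Pi.smul_apply, smul_eq_mul, Finset.mul_sum, mul_assoc]

lemma conj_inn {N : ℕ} (u v : Fin N → ℂ) : conj (inn u v) = inn v u := by
  simp only [inn, map_sum, map_mul, conj_conj, mul_comm]

lemma inn_outer_self_mulVec {N : ℕ} (v u : Fin N → ℂ) :
    inn (outer v v *ᵥ u) u = normSq (inn u v) := by
  rw [outer_mulVec, inn_smul_left, ← conj_inn u v, mul_conj]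

lemma cross_mul_eq_of_consecutive {R : Type*} [CommRing R] [IsDomain R] {f g : ℕ → R} {L : ℕ}
    (hcons : ∀ n < L, f n * g (n + 1) = f (n + 1) * g n) (hg : ∀ k, 0 < k → k < L → g k ≠ 0)
    {i j : ℕ} (hij : i ≤ j) (hj : j ≤ L) : f i * g j = f j * g i := by
  induction j, hij using Nat.le_induction with
  | base => rfl
  | succ j hij ih =>
    have ih := ih (by omega)
    rcases hij.eq_or_lt with rfl | hij
    · exact hcons i (by omega)
    · refine mul_right_cancel₀ (hg j (by omega) (by omega)) ?_
      linear_combination g (j + 1) * ih + g i * hcons j (by omega)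

lemma eq_zero_of_inn_eq_zero_of_cross_mul_eq {N : ℕ} {u x : Fin N → ℂ} (hx : x ≠ 0)
    (hux : inn u x = 0) (h : ∀ i j, u i * x j = u j * x i) : u = 0 := by
  obtain ⟨a, ha⟩ := Function.ne_iff.mp hx
  have hxx : inn x x ≠ 0 := fun h => hx (dotProduct_self_star_eq_zero.mp h)
  have hua : u a * inn x x = inn u x * x a := by
    simp only [inn, Finset.mul_sum, Finset.sum_mul]
    exact Finset.sum_congr rfl fun i _ => by linear_combination conj (x i) * h a i
  rw [hux, zero_mul] at hua
  have hua : u a = 0 := (mul_eq_zero.mp hua).resolve_right hxx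
  funext i
  exact (by simpa [hua] using h i a : u i = 0 ∨ x a = 0).resolve_right ha

def kernelPair {N : ℕ} (x : Fin N → ℂ) (n : ℕ) : Fin 2 → ℂ :=
  ![conj (zeroExtend x (n + 1)), -conj (zeroExtend x n)]

lemma inn_embedPair_kernelPair {N : ℕ} (x w : Fin N → ℂ) (n : ℕ) :
    inn w (embedPair N n (kernelPair x n))
      = zeroExtend w n * zeroExtend x (n + 1) - zeroExtend w (n + 1) * zeroExtend x n := by
  simp [inn_embedPair, kernelPair, sub_eq_add_neg]

lemma exists_inn_embedPair_kernelPair_ne_zero {N : ℕ} {x u : Fin N → ℂ} (hx0 : x ≠ 0)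
    (hx : ∀ i : Fin N, 0 < (i : ℕ) → (i : ℕ) < N - 1 → x i ≠ 0) (hu : u ≠ 0) (hux : inn u x = 0) :
    ∃ n ∈ Finset.range (N - 1), inn u (embedPair N n (kernelPair x n)) ≠ 0 := by
  by_contra! h
  refine hu (eq_zero_of_inn_eq_zero_of_cross_mul_eq hx0 hux ?_)
  have hcons (n : ℕ) (hn : n < N - 1) :
      zeroExtend u n * zeroExtend x (n + 1) = zeroExtend u (n + 1) * zeroExtend x n := by
    rw [← sub_eq_zero, ← inn_embedPair_kernelPair]
    exact h n (Finset.mem_range.mpr hn)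
  have hg (k : ℕ) (hk : 0 < k) (hkN : k < N - 1) : zeroExtend x k ≠ 0 := by
    simpa [zeroExtend, show k < N by omega] using hx ⟨k, by omega⟩ hk hkN
  have hprop {i j : Fin N} (hij : i ≤ j) : u i * x j = u j * x i := by
    simpa only [zeroExtend_val] using
      cross_mul_eq_of_consecutive hcons hg (Fin.le_iff_val_le_val.mp hij) (by omega)
  intro i j
  rcases le_total i j with hij | hji
  · exact hprop hij
  · exact (hprop hji).symm

theorem dual_certificate_exists_Phi_general (N : ℕ) (x : Fin N → ℂ) (hx0 : x ≠ 0)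
    (hx : ∀ i : Fin N, 0 < (i : ℕ) → (i : ℕ) < N - 1 → x i ≠ 0) :
    ∃ γ : Fin 4 → ℕ → ℝ,
      ((∑ n ∈ Finset.range (N - 1), ∑ m : Fin 4,
          (γ m n : ℂ) • outer (phiv N m n) (phiv N m n)).mulVec x = 0) ∧
      (∀ u : Fin N → ℂ, u ≠ 0 → inn u x = 0 →
        0 < (inn ((∑ n ∈ Finset.range (N - 1), ∑ m : Fin 4,
          (γ m n : ℂ) • outer (phiv N m n) (phiv N m n)).mulVec u) u).re) := by
  let v n := embedPair N n (kernelPair x n)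
  let γ m n := frameCoeff (vecMulVec (kernelPair x n) (star (kernelPair x n))) m
  have hY : ∑ n ∈ Finset.range (N - 1), ∑ m : Fin 4, (γ m n : ℂ) • outer (phiv N m n) (phiv N m n)
      = ∑ n ∈ Finset.range (N - 1), outer (v n) (v n) :=
    Finset.sum_congr rfl fun n _ => by
      simp only [phiv_eq_embedPair]
      exact sum_smul_outer_embedPair n (fun m => (γ m n : ℂ)) coef (kernelPair x n)
        (posSemidef_vecMulVec_self_star _).isHermitian.sum_frameCoeff_smul_vecMulVec_coef
  refine ⟨γ, ?_, fun u hu hux => ?_⟩ <;> rw [hY]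
  · rw [sum_mulVec]
    refine Finset.sum_eq_zero fun n _ => ?_
    rw [outer_mulVec, inn_embedPair_kernelPair, mul_comm, sub_self, zero_smul]
  · rw [sum_mulVec, inn_sum_left]
    simp only [inn_outer_self_mulVec, ← ofReal_sum, ofReal_re]
    obtain ⟨n, hn, hne⟩ := exists_inn_embedPair_kernelPair_ne_zero hx0 hx hu hux
    exact Finset.sum_pos' (fun n _ => normSq_nonneg _) ⟨n, hn, normSq_pos.mpr hne⟩

/-- Theorem 5 (part Φ): for every x ∈ S_Φ there is a dual certificate
Y = Σ_{m,n} γ_{m,n}·φ_{m,n} φ_{m,n}* in the range of A_Φ* with Yx = 0 and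
Y positive definite on the orthogonal complement of x. -/
theorem dual_certificate_exists_Phi (N : ℕ) (hN : 2 ≤ N) (x : Fin N → ℂ) (hx0 : x ≠ 0)
    (hx : ∀ i : Fin N, 0 < (i : ℕ) → (i : ℕ) < N - 1 → x i ≠ 0) :
    ∃ γ : Fin 4 → ℕ → ℝ,
      ((∑ n ∈ Finset.range (N - 1), ∑ m : Fin 4,
          (γ m n : ℂ) • outer (phiv N m n) (phiv N m n)).mulVec x = 0) ∧
      (∀ u : Fin N → ℂ, u ≠ 0 → inn u x = 0 →
        0 < (inn ((∑ n ∈ Finset.range (N - 1), ∑ m : Fin 4,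
          (γ m n : ℂ) • outer (phiv N m n) (phiv N m n)).mulVec u) u).re) :=
  dual_certificate_exists_Phi_general N x hx0 hx
end
end

section
/- Let N ≥ 2 and let x ∈ ℂ^N satisfy x[1] ≠ 0. If y ∈ ℂ^N is such that the Hermitian matrix X = x y* + y x* satisfies trace(ψ_{m,n} ψ_{m,n}* · X) = 0 for all m = 1,…,4 and n = 1,…,N−1, then X = 0. (Theorem 6, part 2: the restriction of A_Ψ to the tangent space T_x = {x y* + y x* : y ∈ ℂ^N} is injective for every x ∈ S_Ψ.) -/
open Complex Matrix MeasureTheory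

noncomputable section

/-!
Write `X = x y* + y x*`. For every `ψ`, `trace (ψ ψ* X) = 2 Re (⟨x, ψ⟩ conj ⟨y, ψ⟩)`, and on the
two-dimensional support `{1, n + 1}` of `ψ_{m,n}` the four frame vectors `(α, β), (β, α), (α, -β),
(-β, α)` separate `Re (x₁ ȳ₁)` and `x₁ ȳ_{n+1} + y₁ x̄_{n+1}`, because `α` is real and nonzero,
`|α| ≠ |β|` and `β²` is not real. If all measurements vanish, then `x̄₁ y + ȳ₁ x = 0`, so
`y = λ x` with `λ = -ȳ₁ / x̄₁` purely imaginary, and `X = (λ + λ̄) x x* = 0`.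
-/

open scoped ComplexConjugate

theorem normSq_alph : normSq alph = (1 - 1 / Real.sqrt 3) / 2 := by
  have hA : (0 : ℝ) ≤ (1 - 1 / Real.sqrt 3) / 2 := by
    have : 1 / Real.sqrt 3 ≤ 1 := by
      rw [div_le_one (by positivity), Real.one_le_sqrt]; norm_num
    linarith
  rw [alph, normSq_ofReal, Real.mul_self_sqrt hA]

theorem normSq_beta : normSq beta = (1 + 1 / Real.sqrt 3) / 2 := by
  rw [beta, normSq_mul, normSq_ofReal, Real.mul_self_sqrt (by positivity),
    show I * (5 * (Real.pi : ℂ) / 4) = ((5 * Real.pi / 4 : ℝ) : ℂ) * I by push_cast; ring,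
    normSq_eq_norm_sq, norm_exp_ofReal_mul_I, one_pow, one_mul]

theorem alph_ne_zero : alph ≠ 0 := by
  rw [← normSq_pos, normSq_alph]
  have : 1 / Real.sqrt 3 < 1 := by
    rw [div_lt_one (by positivity), Real.lt_sqrt zero_le_one]; norm_num
  linarith

theorem normSq_alph_ne_normSq_beta : normSq alph ≠ normSq beta := by
  rw [normSq_alph, normSq_beta]
  have : 0 < 1 / Real.sqrt 3 := by positivity
  linarith

theorem beta_sq : beta ^ 2 = I * ((1 + 1 / Real.sqrt 3) / 2 : ℝ) := by
  rw [beta, mul_pow, ← exp_nat_mul, ← ofReal_pow, Real.sq_sqrt (by positivity)]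
  congr 1
  rw [show ((2 : ℕ) : ℂ) * (I * (5 * (Real.pi : ℂ) / 4))
      = (Real.pi / 2 : ℝ) * I + 2 * Real.pi * I by push_cast; ring,
    exp_add, exp_two_pi_mul_I, mul_one, exp_mul_I, ← ofReal_cos, ← ofReal_sin,
    Real.cos_pi_div_two, Real.sin_pi_div_two]
  simp

theorem beta_sq_ne_conj_sq : beta ^ 2 ≠ conj beta ^ 2 := by
  rw [← map_pow, beta_sq, map_mul, conj_I, conj_ofReal, ne_eq, neg_mul,
    eq_neg_iff_add_eq_zero, ← two_mul]
  simp only [mul_eq_zero, two_ne_zero, I_ne_zero, ofReal_eq_zero, false_or]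
  positivity

theorem trace_outer_mul_outer_add_outer {N : ℕ} (ψ x y : Fin N → ℂ) :
    trace (outer ψ ψ * (outer x y + outer y x)) =
      inn x ψ * conj (inn y ψ) + inn y ψ * conj (inn x ψ) := by
  simp only [trace, diag, mul_apply, Matrix.add_apply, outer, inn, map_sum, map_mul, conj_conj,
    Finset.sum_mul_sum, ← Finset.sum_add_distrib]
  rw [Finset.sum_comm]
  exact Finset.sum_congr rfl fun _ _ => Finset.sum_congr rfl fun _ _ => by ring

theorem inn_psiv {N : ℕ} (x : Fin N → ℂ) (m : Fin 4) {n : ℕ} (hn : n + 1 < N) :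
    inn x (psiv N m n) = inn ![x ⟨0, by omega⟩, x ⟨n + 1, hn⟩] (coef m) := by
  rw [inn, Fintype.sum_eq_add ⟨0, by omega⟩ ⟨n + 1, hn⟩ (by simp [Fin.ext_iff])]
  · simp [inn, psiv]
  · rintro k ⟨hk₀, hk⟩
    simp [psiv, Fin.ext_iff.not.mp hk₀, Fin.ext_iff.not.mp hk]

def frame (a b : ℂ) : Fin 4 → Fin 2 → ℂ := ![![a, b], ![b, a], ![a, -b], ![-b, a]]

theorem coef_eq_frame : coef = frame alph beta := rfl

theorem symm_forms_eq_zero_of_frame {a b : ℂ} (ha_real : conj a = a) (ha : a ≠ 0)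
    (hab : normSq a ≠ normSq b) (hb : b ^ 2 ≠ conj b ^ 2) (u v : Fin 2 → ℂ)
    (h : ∀ m, inn u (frame a b m) * conj (inn v (frame a b m)) +
      inn v (frame a b m) * conj (inn u (frame a b m)) = 0) :
    u 0 * conj (v 0) + v 0 * conj (u 0) = 0 ∧ u 0 * conj (v 1) + v 0 * conj (u 1) = 0 := by
  have h1 := h 0
  have h2 := h 1
  have h3 := h 2
  have h4 := h 3
  simp only [frame, inn, Fin.sum_univ_two, Matrix.cons_val_zero, Matrix.cons_val_one,
    Matrix.cons_val_two, Matrix.cons_val_three, Matrix.head_cons, Matrix.tail_cons, map_add,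
    map_mul, map_neg, conj_conj, ha_real] at h1 h2 h3 h4
  have hA : a * a = normSq a := by rw [← mul_conj, ha_real]
  have hB : b * conj b = normSq b := mul_conj b
  -- Summing the measurements at `(a, ±b)` and at `(±b, a)` cancels the cross terms;
  -- taking differences instead cancels the diagonal ones.
  constructor
  · have hP : (a * a * (a * a) - b * conj b * (b * conj b)) *
        (u 0 * conj (v 0) + v 0 * conj (u 0)) = 0 := by
      linear_combination (a * a / 2) * (h1 + h3) - (b * conj b / 2) * (h2 + h4)
    have hnorm : normSq a * normSq a - normSq b * normSq b ≠ 0 := by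
      rw [mul_self_sub_mul_self]
      exact mul_ne_zero (add_pos_of_pos_of_nonneg (normSq_pos.mpr ha) (normSq_nonneg b)).ne'
        (sub_ne_zero.mpr hab)
    refine (mul_eq_zero.mp hP).resolve_left ?_
    rw [hA, hB]
    exact_mod_cast hnorm
  · have hQ : (2 * a * (b ^ 2 - conj b ^ 2)) * (u 0 * conj (v 1) + v 0 * conj (u 1)) = 0 := by
      linear_combination b * (h1 - h3) - conj b * (h2 - h4)
    exact (mul_eq_zero.mp hQ).resolve_left
      (mul_ne_zero (mul_ne_zero two_ne_zero ha) (sub_ne_zero.mpr hb))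

theorem outer_add_outer_eq_zero {N : ℕ} {x y : Fin N → ℂ} (i₀ : Fin N) (hx : x i₀ ≠ 0)
    (h : ∀ k, x i₀ * conj (y k) + y i₀ * conj (x k) = 0) : outer x y + outer y x = 0 := by
  ext i j
  have hj := h j
  have hi : conj (x i₀) * y i + conj (y i₀) * x i = 0 := by
    simpa [map_add, map_mul, conj_conj] using congrArg conj (h i)
  have key : (x i * conj (y j) + y i * conj (x j)) * (x i₀ * conj (x i₀)) = 0 := by
    linear_combination (x i * conj (x i₀)) * hj + (x i₀ * conj (x j)) * hi
      - (x i * conj (x j)) * h i₀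
  refine (mul_eq_zero.mp key).resolve_right (mul_ne_zero hx ?_)
  rwa [map_ne_zero]

/-- Theorem 6 (part 2): for x ∈ S_Ψ the restriction of A_Ψ to the tangent space
T_x = {xy* + yx* : y ∈ ℂ^N} is injective. -/
theorem tangent_injective_Psi (N : ℕ) (hN : 2 ≤ N) (x : Fin N → ℂ)
    (hx : x ⟨0, by omega⟩ ≠ 0) (y : Fin N → ℂ)
    (hker : ∀ (m : Fin 4) (n : ℕ), n + 1 < N →
      Matrix.trace (outer (psiv N m n) (psiv N m n) * (outer x y + outer y x)) = 0) :
    outer x y + outer y x = 0 := by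
  have hblock (n : ℕ) (hn : n + 1 < N) :=
    symm_forms_eq_zero_of_frame (conj_ofReal _) alph_ne_zero normSq_alph_ne_normSq_beta
      beta_sq_ne_conj_sq ![x ⟨0, by omega⟩, x ⟨n + 1, hn⟩] ![y ⟨0, by omega⟩, y ⟨n + 1, hn⟩]
      fun m => by
        have hm := hker m n hn
        rwa [trace_outer_mul_outer_add_outer, inn_psiv, inn_psiv, coef_eq_frame] at hm
  refine outer_add_outer_eq_zero _ hx fun ⟨k, hk⟩ => ?_
  cases k with
  | zero => exact (hblock 0 hN).1
  | succ n => exact (hblock n hk).2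
end
end
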